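/- arXiv:1804.01629 — 5 statements merged into one kernel-verified Lean document; each statement's English description precedes it below -/
import Mathlib

section
/- Let \mathcal{M} be a finite set of positive integers of cardinality at most N, and suppose \mathcal{P} is a set of k distinct primes none of which divides any element of \mathcal{M}, where 2^k|\mathcal{M}| \le N. Let D be the product of the primes in \mathcal{P} and \mathcal{M}'' := \{dm : d \mid D, m \in \mathcal{M}\}. Then |\mathcal{M}''| = 2^k |\mathcal{M}| and S(\mathcal{M}'') \ge |\mathcal{M}''| \cdot S(\mathcal{M})/|\mathcal{M}|, where S(\mathcal{A}) := \sum_{m,n \in \mathcal{A}} \sqrt{\gcd(m,n)/\mathrm{lcm}(m,n)}. -/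
/-!
Since every `m ∈ M` is coprime to `D`, the divisor `d` is recovered from `d * m` as
`gcd (d * m) D`; hence `M''` is the disjoint union of the dilates `d • M` over the `2 ^ k`
divisors `d ∣ D`. Each dilate has the same Gál sum as `M`, because `gcd / lcm` is invariant
under scaling both arguments, and the Gál sum of a disjoint union dominates the sum of the
Gál sums of the pieces (drop the cross terms, which are nonnegative).
-/

open Finset

noncomputable def galSum (A : Finset ℕ) : ℝ :=
  ∑ m ∈ A, ∑ n ∈ A, Real.sqrt ((Nat.gcd m n : ℝ) / (Nat.lcm m n : ℝ))

lemma Nat.card_divisors_prod_primes {P : Finset ℕ} (hP : ∀ p ∈ P, p.Prime) :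
    #(∏ p ∈ P, p).divisors = 2 ^ #P := by
  rw [Nat.card_divisors (prod_ne_zero_iff.2 fun p hp ↦ (hP p hp).ne_zero),
    Nat.primeFactors_prod hP, ← prod_const]
  refine prod_congr rfl fun p hp ↦ ?_
  rw [Nat.factorization_prod fun q hq ↦ (hP q hq).ne_zero, Finsupp.finsetSum_apply,
    sum_eq_single_of_mem p hp fun q hq hqp ↦ ?_, (hP p hp).factorization_self]
  rw [(hP q hq).factorization, Finsupp.single_eq_of_ne hqp.symm]

lemma Nat.Coprime.gcd_mul_eq_of_dvd {m d D : ℕ} (hm : m.Coprime D) (hd : d ∣ D) :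
    Nat.gcd (d * m) D = d := by
  rw [hm.gcd_mul_right_cancel, Nat.gcd_eq_left hd]

lemma pairwiseDisjoint_image_mul_divisors {D : ℕ} {M : Finset ℕ}
    (hM : ∀ m ∈ M, m.Coprime D) :
    (D.divisors : Set ℕ).PairwiseDisjoint fun d ↦ M.image (d * ·) := by
  intro d hd d' hd' hne
  refine disjoint_left.2 fun x hx hx' ↦ hne ?_
  obtain ⟨m, hm, rfl⟩ := mem_image.1 hx
  obtain ⟨m', hm', hmm'⟩ := mem_image.1 hx'
  rw [← (hM m hm).gcd_mul_eq_of_dvd (Nat.dvd_of_mem_divisors hd),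
    ← (hM m' hm').gcd_mul_eq_of_dvd (Nat.dvd_of_mem_divisors hd'), hmm']

lemma galSum_image_mul_left {d : ℕ} (hd : 0 < d) (A : Finset ℕ) :
    galSum (A.image (d * ·)) = galSum A := by
  have hinj : Set.InjOn (d * ·) A := (mul_right_injective₀ hd.ne').injOn
  simp only [galSum, sum_image hinj, Nat.gcd_mul_left, Nat.lcm_mul_left, Nat.cast_mul]
  refine sum_congr rfl fun m _ ↦ sum_congr rfl fun n _ ↦ ?_
  rw [mul_div_mul_left _ _ (by exact_mod_cast hd.ne')]

lemma sum_galSum_le_galSum_biUnion {ι : Type*} {s : Finset ι} {F : ι → Finset ℕ}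
    (hF : (s : Set ι).PairwiseDisjoint F) :
    ∑ i ∈ s, galSum (F i) ≤ galSum (s.biUnion F) := by
  unfold galSum
  rw [sum_biUnion hF]
  refine sum_le_sum fun i hi ↦ sum_le_sum fun m _ ↦ ?_
  exact sum_le_sum_of_subset_of_nonneg (subset_biUnion_of_mem F hi)
    fun _ _ _ ↦ Real.sqrt_nonneg _

theorem stmt_0_general (k : ℕ) (M P : Finset ℕ)
    (hP : ∀ p ∈ P, Nat.Prime p)
    (hPk : P.card = k)
    (hPnd : ∀ p ∈ P, ∀ m ∈ M, ¬ p ∣ m)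
    (D : ℕ) (hD : D = ∏ p ∈ P, p)
    (M'' : Finset ℕ) (hM'' : M'' = (D.divisors ×ˢ M).image (fun x => x.1 * x.2)) :
    M''.card = 2 ^ k * M.card ∧
      (M.card : ℝ) * galSum M'' ≥ (M''.card : ℝ) * galSum M := by
  have hcop : ∀ m ∈ M, m.Coprime D := fun m hm ↦ hD ▸ Nat.Coprime.prod_right fun p hp ↦
    ((hP p hp).coprime_iff_not_dvd.2 (hPnd p hp m hm)).symm
  have hdisj := pairwiseDisjoint_image_mul_divisors hcop
  have hcard_div : #D.divisors = 2 ^ k := by rw [hD, Nat.card_divisors_prod_primes hP, hPk]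
  have hM''_eq : M'' = D.divisors.biUnion fun d ↦ M.image (d * ·) := by
    rw [hM'', biUnion_image_left, ← image_uncurry_product]
    rfl
  have hcard : #M'' = 2 ^ k * #M := by
    rw [hM''_eq, card_biUnion hdisj, sum_congr rfl fun d hd ↦ card_image_of_injective M
      (mul_right_injective₀ (Nat.pos_of_mem_divisors hd).ne'), sum_const, hcard_div, smul_eq_mul]
  have hgal : (2 ^ k : ℝ) * galSum M ≤ galSum M'' := by
    calc (2 ^ k : ℝ) * galSum M
        = ∑ d ∈ D.divisors, galSum (M.image (d * ·)) := by
          rw [sum_congr rfl fun d hd ↦ galSum_image_mul_left (Nat.pos_of_mem_divisors hd) M,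
            sum_const, hcard_div, nsmul_eq_mul, Nat.cast_pow, Nat.cast_ofNat]
      _ ≤ galSum M'' := hM''_eq ▸ sum_galSum_le_galSum_biUnion hdisj
  refine ⟨hcard, ?_⟩
  rw [ge_iff_le, hcard]
  push_cast
  linarith [mul_le_mul_of_nonneg_left hgal (Nat.cast_nonneg (α := ℝ) #M)]

theorem stmt_0 (N k : ℕ) (M P : Finset ℕ)
    (hMpos : ∀ m ∈ M, 0 < m)
    (hMN : M.card ≤ N)
    (hP : ∀ p ∈ P, Nat.Prime p)
    (hPk : P.card = k)
    (hPnd : ∀ p ∈ P, ∀ m ∈ M, ¬ p ∣ m)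
    (hk : 2 ^ k * M.card ≤ N)
    (D : ℕ) (hD : D = ∏ p ∈ P, p)
    (M'' : Finset ℕ) (hM'' : M'' = (D.divisors ×ˢ M).image (fun x => x.1 * x.2)) :
    M''.card = 2 ^ k * M.card ∧
      (M.card : ℝ) * galSum M'' ≥ (M''.card : ℝ) * galSum M :=
  stmt_0_general k M P hP hPk hPnd D hD M'' hM''
end

section
/- For every prime p and all integers r, s with 0 \le r \le s, and all strictly increasing sequences of nonnegative integers \nu_0 < \nu_1 < \dots < \nu_r and \mu_0 < \mu_1 < \dots < \mu_s, the sum \sigma := \sum_{0 \le \alpha \le r} \sum_{0 \le \beta \le s} p^{-|\nu_\alpha - \mu_\beta|/2} satisfies \sigma \le r + 1 + (2r+2)/(\sqrt{p}-1). -/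
/-!
With `x = p^(-1/2) < 1` the summand is `x ^ |ν α - μ β|`. For fixed `α` the integers
`ν α - μ β` are pairwise distinct because `μ` is strictly increasing, so the inner sum is at most
the two-sided geometric series `∑_{n ∈ ℤ} x^|n| = (1 + x) / (1 - x) = 1 + 2 / (√p - 1)`.
Summing over the `r + 1` values of `α` gives the bound.
-/

open Finset

theorem hasSum_pow_natAbs {x : ℝ} (hx : |x| < 1) :
    HasSum (fun n : ℤ ↦ x ^ n.natAbs) ((1 + x) / (1 - x)) := by
  have hgeom := hasSum_geometric_of_abs_lt_one hx
  have hx1 : 1 - x ≠ 0 := by linarith [le_abs_self x]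
  have hneg : HasSum (fun n : ℕ ↦ x ^ (-((n : ℤ) + 1)).natAbs) (x * (1 - x)⁻¹) := by
    have hterm (n : ℕ) : x ^ (-((n : ℤ) + 1)).natAbs = x * x ^ n := by
      rw [← pow_succ']
      congr 1
    simpa only [hterm] using hgeom.mul_left x
  have hpos : HasSum (fun n : ℕ ↦ x ^ (n : ℤ).natAbs) (1 - x)⁻¹ := by
    simpa only [Int.natAbs_natCast] using hgeom
  have hsum : (1 + x) / (1 - x) = (1 - x)⁻¹ + x * (1 - x)⁻¹ := by field_simp
  exact hsum ▸ hpos.of_nat_of_neg_add_one hneg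

theorem sum_pow_natAbs_sub_le {ι : Type*} (s : Finset ι) {f : ι → ℤ} (hf : Set.InjOn f s)
    (a : ℤ) {x : ℝ} (hx0 : 0 ≤ x) (hx1 : x < 1) :
    ∑ i ∈ s, x ^ (a - f i).natAbs ≤ (1 + x) / (1 - x) := by
  have hinj : Set.InjOn (fun i ↦ a - f i) s := fun i hi j hj h ↦ hf hi hj (by simpa using h)
  rw [← sum_image (f := fun n : ℤ ↦ x ^ n.natAbs) hinj]
  have hx : |x| < 1 := abs_lt.2 ⟨by linarith, hx1⟩
  exact sum_le_hasSum _ (fun _ _ ↦ by positivity) (hasSum_pow_natAbs hx)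

theorem Real.rpow_neg_natCast_div_two {x : ℝ} (hx : 0 ≤ x) (k : ℕ) :
    x ^ (-(k : ℝ) / 2) = (√x)⁻¹ ^ k := by
  rw [Real.sqrt_eq_rpow, ← Real.rpow_neg hx, ← Real.rpow_natCast, ← Real.rpow_mul hx]
  ring_nf

theorem injOn_range_of_lt_succ {μ : ℕ → ℕ} {s : ℕ} (hμ : ∀ i, i < s → μ i < μ (i + 1)) :
    Set.InjOn (fun i ↦ (μ i : ℤ)) (range (s + 1)) := by
  have hmono : StrictMonoOn μ (Set.Iic s) := strictMonoOn_Iic_of_lt_succ hμ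
  refine (Nat.cast_injective.comp_injOn hmono.injOn).mono fun i hi ↦ ?_
  simpa [Nat.lt_succ_iff] using hi

theorem stmt_8_general (p : ℕ) (hp : Nat.Prime p) (r s : ℕ)
    (ν μ : ℕ → ℕ)
    (hμ : ∀ i, i < s → μ i < μ (i + 1)) :
    ∑ α ∈ Finset.range (r + 1), ∑ β ∈ Finset.range (s + 1),
        (p : ℝ) ^ (-((((ν α : ℤ) - (μ β : ℤ)).natAbs : ℝ)) / 2) ≤
      (r : ℝ) + 1 + (2 * r + 2) / (Real.sqrt p - 1) := by
  have hsqrt : 1 < √(p : ℝ) := by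
    rw [Real.lt_sqrt zero_le_one, one_pow]
    exact_mod_cast hp.one_lt
  set x : ℝ := (√(p : ℝ))⁻¹
  have hx0 : 0 ≤ x := by positivity
  have hx1 : x < 1 := inv_lt_one_of_one_lt₀ hsqrt
  calc _ ≤ ∑ _α ∈ range (r + 1), (1 + x) / (1 - x) := by
        refine sum_le_sum fun α _ ↦ ?_
        simp only [Real.rpow_neg_natCast_div_two (Nat.cast_nonneg p)]
        exact sum_pow_natAbs_sub_le _ (injOn_range_of_lt_succ hμ) _ hx0 hx1
    _ = (r : ℝ) + 1 + (2 * r + 2) / (√(p : ℝ) - 1) := by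
        have : √(p : ℝ) - 1 ≠ 0 := by linarith
        simp only [sum_const, card_range, nsmul_eq_mul, x]
        field_simp
        push_cast
        ring

theorem stmt_8 (p : ℕ) (hp : Nat.Prime p) (r s : ℕ) (hrs : r ≤ s)
    (ν μ : ℕ → ℕ)
    (hν : ∀ i, i < r → ν i < ν (i + 1))
    (hμ : ∀ i, i < s → μ i < μ (i + 1)) :
    ∑ α ∈ Finset.range (r + 1), ∑ β ∈ Finset.range (s + 1),
        (p : ℝ) ^ (-((((ν α : ℤ) - (μ β : ℤ)).natAbs : ℝ)) / 2) ≤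
      (r : ℝ) + 1 + (2 * r + 2) / (Real.sqrt p - 1) :=
  stmt_8_general p hp r s ν μ hμ
end

section
/- Let D be a positive integer and \alpha > 0. Let \mathcal{T}_D be the set of divisors of D. Then \sum_{m,n \mid D} (\gcd(m,n)/\mathrm{lcm}(m,n))^\alpha = \tau(D) \prod_{p^{\mu} \| D} \left(1 + \frac{2\mu}{(1+\mu) p^\alpha} \sum_{0 \le k < \mu} \frac{1 - k/\mu}{p^{k\alpha}}\right), where \tau(D) is the number of divisors of D and the product is over prime powers p^\mu exactly dividing D. -/
open Finset

/-
The sum is multiplicative in D: divisors of a product of coprime numbers are products of divisors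
of the factors, and gcd and lcm split accordingly. For D = p^μ the pairs of divisors are (p^i, p^j) with
0 ≤ i, j ≤ μ, and gcd/lcm = p^{-|i-j|}; the resulting double sum is (μ + 1) + 2x ∑_{k<μ} (μ - k) x^k
with x = p^{-α}, whose product over p ∥ D is the stated formula since τ(D) = ∏ (μ + 1).
-/

namespace Nat.Coprime

variable {M N a b c e : ℕ}

theorem sum_divisors_mul_eq {R : Type*} [AddCommMonoid R] (h : M.Coprime N) (g : ℕ → R) :
    ∑ d ∈ (M * N).divisors, g d = ∑ a ∈ M.divisors, ∑ b ∈ N.divisors, g (a * b) := by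
  rw [Nat.divisors_mul, Finset.mul_def, sum_image h.mul_injOn_divisors, sum_product]

theorem gcd_mul_mul_of_dvd (h : M.Coprime N) (ha : a ∣ M) (hb : b ∣ N) (hc : c ∣ M)
    (he : e ∣ N) : (a * b).gcd (c * e) = a.gcd c * b.gcd e := by
  rw [((h.coprime_dvd_left hc).coprime_dvd_right he).gcd_mul,
    ((h.symm.coprime_dvd_left hb).coprime_dvd_right hc).gcd_mul_right_cancel,
    ((h.coprime_dvd_left ha).coprime_dvd_right he).gcd_mul_left_cancel]

theorem lcm_mul_mul_of_dvd (h : M.Coprime N) (ha : a ∣ M) (hb : b ∣ N) (hc : c ∣ M)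
    (he : e ∣ N) : (a * b).lcm (c * e) = a.lcm c * b.lcm e := by
  have hgcd := h.gcd_mul_mul_of_dvd ha hb hc he
  rcases Nat.eq_zero_or_pos ((a * b).gcd (c * e)) with h0 | hpos
  · rw [hgcd, mul_eq_zero, Nat.gcd_eq_zero_iff, Nat.gcd_eq_zero_iff] at h0
    rcases h0 with ⟨rfl, rfl⟩ | ⟨rfl, rfl⟩ <;> simp
  refine Nat.eq_of_mul_eq_mul_left hpos ?_
  rw [Nat.gcd_mul_lcm, hgcd, mul_mul_mul_comm (a.gcd c), Nat.gcd_mul_lcm, Nat.gcd_mul_lcm]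
  ring

theorem gcd_div_lcm_mul_mul_of_dvd (h : M.Coprime N) (ha : a ∣ M) (hb : b ∣ N) (hc : c ∣ M)
    (he : e ∣ N) : ((a * b).gcd (c * e) : ℝ) / (a * b).lcm (c * e) =
      (a.gcd c / a.lcm c) * (b.gcd e / b.lcm e) := by
  rw [h.gcd_mul_mul_of_dvd ha hb hc he, h.lcm_mul_mul_of_dvd ha hb hc he]
  push_cast
  exact mul_div_mul_comm _ _ _ _

end Nat.Coprime

theorem Nat.gcd_div_lcm_pow_pow {p : ℕ} (hp : p ≠ 0) (i j : ℕ) :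
    ((p ^ i).gcd (p ^ j) : ℝ) / (p ^ i).lcm (p ^ j) = (p : ℝ)⁻¹ ^ (max i j - min i j) := by
  wlog hij : i ≤ j generalizing i j
  · rw [Nat.gcd_comm, Nat.lcm_comm, max_comm, min_comm]
    exact this j i (le_of_not_ge hij)
  obtain ⟨k, rfl⟩ := Nat.exists_eq_add_of_le hij
  rw [Nat.gcd_eq_left (pow_dvd_pow p hij), Nat.lcm_eq_right (pow_dvd_pow p hij),
    max_eq_right hij, min_eq_left hij, Nat.add_sub_cancel_left]
  have hp' : (p : ℝ) ≠ 0 := by exact_mod_cast hp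
  push_cast
  rw [pow_add, inv_pow]
  field_simp

theorem sum_range_sum_range_pow_max_sub_min {R : Type*} [CommRing R] (x : R) (μ : ℕ) :
    ∑ i ∈ range (μ + 1), ∑ j ∈ range (μ + 1), x ^ (max i j - min i j) =
      (μ + 1) + 2 * x * ∑ k ∈ range μ, ((μ : R) - k) * x ^ k := by
  induction μ with
  | zero => simp
  | succ μ ih =>
    have row : ∀ i ∈ range (μ + 1), x ^ (max i (μ + 1) - min i (μ + 1)) = x ^ (μ - i) * x := by
      intro i hi
      rw [mem_range] at hi
      rw [max_eq_right hi.le, min_eq_left hi.le, ← pow_succ, Nat.sub_add_comm (by omega)]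
    have col : ∀ j ∈ range (μ + 1), x ^ (max (μ + 1) j - min (μ + 1) j) = x ^ (μ - j) * x := by
      intro j hj
      rw [max_comm, min_comm]
      exact row j hj
    have edge : ∑ i ∈ range (μ + 1), x ^ (μ - i) * x = x * ∑ k ∈ range (μ + 1), x ^ k := by
      rw [← sum_mul, mul_comm, ← sum_range_reflect (fun k => x ^ k) (μ + 1), Nat.add_sub_cancel]
    simp only [sum_range_succ _ (μ + 1), sum_add_distrib]
    rw [ih, sum_congr rfl row, sum_congr rfl col, edge, max_self, min_self, Nat.sub_self,
      pow_zero, sum_range_succ (fun k => ((↑(μ + 1) : R) - k) * x ^ k)]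
    simp only [Nat.cast_succ, add_sub_right_comm _ (1 : R), add_mul, one_mul, sum_add_distrib,
      mul_add]
    rw [sum_range_succ (fun k : ℕ => x ^ k)]
    ring

theorem add_one_add_two_mul_sum_eq {K : Type*} [Field K] [CharZero K] {q : K} (hq : q ≠ 0)
    (μ : ℕ) :
    (μ + 1) + 2 * q⁻¹ * ∑ k ∈ range μ, ((μ : K) - k) * q⁻¹ ^ k =
      (μ + 1) * (1 + 2 * μ / ((1 + μ) * q) * ∑ k ∈ range μ, (1 - (k : K) / μ) / q ^ k) := by
  rcases Nat.eq_zero_or_pos μ with rfl | hμ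
  · simp
  have hμ' : (μ : K) ≠ 0 := by exact_mod_cast hμ.ne'
  rw [add_comm 1 (μ : K)]
  simp only [mul_add, mul_one, mul_sum]
  congr 1
  refine sum_congr rfl fun k _ => ?_
  rw [inv_pow]
  field_simp

noncomputable def gcdLcmSum (α : ℝ) (N : ℕ) : ℝ :=
  ∑ m ∈ N.divisors, ∑ n ∈ N.divisors, ((m.gcd n : ℝ) / m.lcm n) ^ α

theorem gcdLcmSum_one (α : ℝ) : gcdLcmSum α 1 = 1 := by
  simp [gcdLcmSum]

theorem gcdLcmSum_mul (α : ℝ) {M N : ℕ} (h : M.Coprime N) :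
    gcdLcmSum α (M * N) = gcdLcmSum α M * gcdLcmSum α N := by
  simp only [gcdLcmSum, h.sum_divisors_mul_eq, sum_mul_sum]
  refine sum_congr rfl fun a ha => sum_congr rfl fun b hb => sum_congr rfl fun c hc =>
    sum_congr rfl fun e he => ?_
  rw [h.gcd_div_lcm_mul_mul_of_dvd (Nat.dvd_of_mem_divisors ha) (Nat.dvd_of_mem_divisors hb)
    (Nat.dvd_of_mem_divisors hc) (Nat.dvd_of_mem_divisors he),
    Real.mul_rpow (by positivity) (by positivity)]

theorem gcdLcmSum_prime_pow (α : ℝ) {p : ℕ} (hp : p.Prime) (μ : ℕ) :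
    gcdLcmSum α (p ^ μ) =
      ∑ i ∈ range (μ + 1), ∑ j ∈ range (μ + 1), ((p : ℝ) ^ α)⁻¹ ^ (max i j - min i j) := by
  simp only [gcdLcmSum, Nat.sum_divisors_prime_pow hp, Nat.gcd_div_lcm_pow_pow hp.ne_zero]
  refine sum_congr rfl fun i _ => sum_congr rfl fun j _ => ?_
  have hp0 : (0 : ℝ) ≤ p := Nat.cast_nonneg p
  rw [← Real.rpow_pow_comm (inv_nonneg.mpr hp0), Real.inv_rpow hp0]

theorem stmt_9_general (D : ℕ) (hD : 0 < D) (α : ℝ) :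
    ∑ m ∈ D.divisors, ∑ n ∈ D.divisors,
        ((Nat.gcd m n : ℝ) / (Nat.lcm m n : ℝ)) ^ α =
      (D.divisors.card : ℝ) *
        ∏ p ∈ D.primeFactors,
          (1 + (2 * (D.factorization p : ℝ)) /
              ((1 + (D.factorization p : ℝ)) * (p : ℝ) ^ α) *
            ∑ k ∈ Finset.range (D.factorization p),
              (1 - (k : ℝ) / (D.factorization p : ℝ)) / (p : ℝ) ^ ((k : ℝ) * α)) := by
  change gcdLcmSum α D = _
  rw [Nat.multiplicative_factorization _ (fun _ _ => gcdLcmSum_mul α) (gcdLcmSum_one α) hD.ne',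
    Finsupp.prod, Nat.support_factorization, Nat.card_divisors hD.ne', Nat.cast_prod,
    ← prod_mul_distrib]
  refine prod_congr rfl fun p hp => ?_
  have hp' := Nat.prime_of_mem_primeFactors hp
  have hpα : (p : ℝ) ^ α ≠ 0 := (Real.rpow_pos_of_pos (by exact_mod_cast hp'.pos) α).ne'
  have hpow (k : ℕ) : (p : ℝ) ^ ((k : ℝ) * α) = ((p : ℝ) ^ α) ^ k := by
    rw [mul_comm, Real.rpow_mul_natCast (Nat.cast_nonneg p)]
  rw [gcdLcmSum_prime_pow α hp', sum_range_sum_range_pow_max_sub_min,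
    add_one_add_two_mul_sum_eq hpα]
  simp only [hpow, Nat.cast_add, Nat.cast_one]

theorem stmt_9 (D : ℕ) (hD : 0 < D) (α : ℝ) (hα : 0 < α) :
    ∑ m ∈ D.divisors, ∑ n ∈ D.divisors,
        ((Nat.gcd m n : ℝ) / (Nat.lcm m n : ℝ)) ^ α =
      (D.divisors.card : ℝ) *
        ∏ p ∈ D.primeFactors,
          (1 + (2 * (D.factorization p : ℝ)) /
              ((1 + (D.factorization p : ℝ)) * (p : ℝ) ^ α) *
            ∑ k ∈ Finset.range (D.factorization p),
              (1 - (k : ℝ) / (D.factorization p : ℝ)) / (p : ℝ) ^ ((k : ℝ) * α)) :=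
  stmt_9_general D hD α
end

section
/- Let D be a squarefree positive integer. Then \exp\left(\sum_{p \mid D} p^{-1/2}\right) \prod_{p \mid D} (1 + 1/(2p))^{-1} \le S(\mathcal{T}_D)/\tau(D) \le \exp\left(\sum_{p \mid D} p^{-1/2}\right), where S(\mathcal{T}_D) = \sum_{m,n \mid D} \sqrt{\gcd(m,n)/\mathrm{lcm}(m,n)} and \tau(D) is the number of divisors of D. -/
/-!
For squarefree `m, n` one has `gcd m n / lcm m n = 1 / ∏_{p ∈ S ∆ T} p`, where `S, T` are the
prime-factor sets of `m, n`. Divisors of a squarefree `D` correspond to subsets of its prime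
factors, and for each fixed `S` the map `T ↦ S ∆ T` permutes them, so
`S(𝒯_D) = τ(D) ∏_{p ∣ D} (1 + p^{-1/2})`. Both bounds are then prime-by-prime:
`1 + x ≤ exp x ≤ (1 + x)(1 + x²/2)` for `0 ≤ x ≤ 1`, applied to `x = p^{-1/2}`.
-/

open Finset

theorem Finset.sum_powerset_sum_powerset_prod_symmDiff {ι R : Type*} [DecidableEq ι]
    [CommSemiring R] (s : Finset ι) (f : ι → R) :
    ∑ S ∈ s.powerset, ∑ T ∈ s.powerset, ∏ i ∈ symmDiff S T, f i =
      2 ^ s.card * ∏ i ∈ s, (1 + f i) := by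
  have symmDiff_mem {S T : Finset ι} (hS : S ∈ s.powerset) (hT : T ∈ s.powerset) :
      symmDiff S T ∈ s.powerset :=
    mem_powerset.2 <| symmDiff_le_sup.trans <| union_subset (mem_powerset.1 hS) (mem_powerset.1 hT)
  have inner : ∀ S ∈ s.powerset,
      ∑ T ∈ s.powerset, ∏ i ∈ symmDiff S T, f i = ∏ i ∈ s, (1 + f i) := fun S hS => by
    rw [prod_one_add]
    exact sum_nbij' (symmDiff S) (symmDiff S) (fun _ hT => symmDiff_mem hS hT)
      (fun _ hU => symmDiff_mem hS hU) (fun T _ => symmDiff_symmDiff_cancel_left S T)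
      (fun U _ => symmDiff_symmDiff_cancel_left S U) fun _ _ => rfl
  rw [sum_congr rfl inner, sum_const, card_powerset, nsmul_eq_mul, Nat.cast_pow, Nat.cast_ofNat]

namespace Nat

theorem sum_divisors_eq_sum_powerset_primeFactors {M : Type*} [AddCommMonoid M] {D : ℕ}
    (hD : Squarefree D) (g : Finset ℕ → M) :
    ∑ m ∈ D.divisors, g m.primeFactors = ∑ S ∈ D.primeFactors.powerset, g S := by
  have prod_of_mem {m : ℕ} (hm : m ∈ D.divisors) : ∏ p ∈ m.primeFactors, p = m :=
    prod_primeFactors_of_squarefree (hD.squarefree_of_dvd (dvd_of_mem_divisors hm))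
  refine sum_nbij' primeFactors (fun S => ∏ p ∈ S, p) (fun m hm => ?_) (fun S hS => ?_)
    (fun m hm => prod_of_mem hm) (fun S hS => ?_) fun _ _ => rfl
  · exact mem_powerset.2 (primeFactors_mono (dvd_of_mem_divisors hm) hD.ne_zero)
  · refine mem_divisors.2 ⟨?_, hD.ne_zero⟩
    calc ∏ p ∈ S, p ∣ ∏ p ∈ D.primeFactors, p := prod_dvd_prod_of_subset _ _ _ (mem_powerset.1 hS)
      _ = D := prod_primeFactors_of_squarefree hD
  · exact primeFactors_prod fun p hp => prime_of_mem_primeFactors (mem_powerset.1 hS hp)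

theorem card_divisors_of_squarefree {D : ℕ} (hD : Squarefree D) :
    D.divisors.card = 2 ^ D.primeFactors.card := by
  simpa only [sum_const, smul_eq_mul, mul_one, card_powerset] using
    sum_divisors_eq_sum_powerset_primeFactors hD fun _ => (1 : ℕ)

theorem gcd_eq_prod_inter_of_squarefree {m n : ℕ} (hm : Squarefree m) (hn : Squarefree n) :
    gcd m n = ∏ p ∈ m.primeFactors ∩ n.primeFactors, p := by
  rw [← primeFactors_gcd hm.ne_zero hn.ne_zero,
    prod_primeFactors_of_squarefree (hm.squarefree_of_dvd (gcd_dvd_left m n))]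

theorem lcm_eq_gcd_mul_prod_symmDiff_of_squarefree {m n : ℕ} (hm : Squarefree m)
    (hn : Squarefree n) :
    lcm m n = gcd m n * ∏ p ∈ symmDiff m.primeFactors n.primeFactors, p := by
  refine Nat.eq_of_mul_eq_mul_left (gcd_pos_of_pos_left n hm.ne_zero.bot_lt) ?_
  have := prod_union (disjoint_symmDiff_inf m.primeFactors n.primeFactors) (f := fun p => p)
  rw [gcd_mul_lcm, gcd_eq_prod_inter_of_squarefree hm hn]
  calc m * n = (∏ p ∈ m.primeFactors, p) * ∏ p ∈ n.primeFactors, p := by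
        rw [prod_primeFactors_of_squarefree hm, prod_primeFactors_of_squarefree hn]
    _ = (∏ p ∈ m.primeFactors ∪ n.primeFactors, p) * ∏ p ∈ m.primeFactors ∩ n.primeFactors, p :=
        (prod_union_inter).symm
    _ = _ := by rw [← sup_eq_union, ← symmDiff_sup_inf, sup_eq_union, this, inf_eq_inter]; ring

theorem sqrt_gcd_div_lcm_of_squarefree {m n : ℕ} (hm : Squarefree m) (hn : Squarefree n) :
    Real.sqrt ((gcd m n : ℝ) / (lcm m n : ℝ)) =
      ∏ p ∈ symmDiff m.primeFactors n.primeFactors, (p : ℝ) ^ (-(1 / 2 : ℝ)) := by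
  have hgcd : (gcd m n : ℝ) ≠ 0 := by exact_mod_cast (gcd_pos_of_pos_left n hm.ne_zero.bot_lt).ne'
  rw [lcm_eq_gcd_mul_prod_symmDiff_of_squarefree hm hn, cast_mul, div_mul_cancel_left₀ hgcd,
    Real.sqrt_inv, Real.sqrt_eq_rpow, ← Real.rpow_neg (cast_nonneg _), cast_prod,
    Real.finsetProd_rpow _ _ fun p _ => cast_nonneg p]

end Nat

theorem galSum_divisors_of_squarefree {D : ℕ} (hD : Squarefree D) :
    galSum D.divisors =
      D.divisors.card * ∏ p ∈ D.primeFactors, (1 + (p : ℝ) ^ (-(1 / 2 : ℝ))) := by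
  have squarefree_of_mem {m : ℕ} (hm : m ∈ D.divisors) : Squarefree m :=
    hD.squarefree_of_dvd (Nat.dvd_of_mem_divisors hm)
  calc galSum D.divisors
      = ∑ m ∈ D.divisors, ∑ n ∈ D.divisors,
          ∏ p ∈ symmDiff m.primeFactors n.primeFactors, (p : ℝ) ^ (-(1 / 2 : ℝ)) :=
        sum_congr rfl fun m hm => sum_congr rfl fun n hn =>
          Nat.sqrt_gcd_div_lcm_of_squarefree (squarefree_of_mem hm) (squarefree_of_mem hn)
    _ = ∑ S ∈ D.primeFactors.powerset, ∑ T ∈ D.primeFactors.powerset,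
          ∏ p ∈ symmDiff S T, (p : ℝ) ^ (-(1 / 2 : ℝ)) := by
        refine (Nat.sum_divisors_eq_sum_powerset_primeFactors hD fun S => _).trans
          (sum_congr rfl fun S _ => Nat.sum_divisors_eq_sum_powerset_primeFactors hD
            fun T => ∏ p ∈ symmDiff S T, (p : ℝ) ^ (-(1 / 2 : ℝ)))
    _ = _ := by
        rw [sum_powerset_sum_powerset_prod_symmDiff, Nat.card_divisors_of_squarefree hD,
          Nat.cast_pow, Nat.cast_ofNat]

theorem Real.exp_le_one_add_mul_one_add_sq_div_two {x : ℝ} (hx0 : 0 ≤ x) (hx1 : x ≤ 1) :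
    Real.exp x ≤ (1 + x) * (1 + x ^ 2 / 2) := by
  have h := Real.exp_bound' hx0 hx1 (n := 3) (by norm_num)
  norm_num [sum_range_succ, Nat.factorial] at h
  nlinarith [pow_nonneg hx0 3]

theorem stmt_11 (D : ℕ) (hD : Squarefree D) :
    Real.exp (∑ p ∈ D.primeFactors, (p : ℝ) ^ (-(1 / 2 : ℝ))) *
        ∏ p ∈ D.primeFactors, (1 + 1 / (2 * (p : ℝ)))⁻¹ ≤
      galSum D.divisors / (D.divisors.card : ℝ) ∧
    galSum D.divisors / (D.divisors.card : ℝ) ≤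
      Real.exp (∑ p ∈ D.primeFactors, (p : ℝ) ^ (-(1 / 2 : ℝ))) := by
  have hcard : (D.divisors.card : ℝ) ≠ 0 :=
    Nat.cast_ne_zero.2 (card_ne_zero.2 (Nat.nonempty_divisors.2 hD.ne_zero))
  have hx_nonneg (p : ℕ) : 0 ≤ (p : ℝ) ^ (-(1 / 2 : ℝ)) := Real.rpow_nonneg p.cast_nonneg _
  rw [galSum_divisors_of_squarefree hD, mul_div_cancel_left₀ _ hcard]
  refine ⟨?_, Real.prod_one_add_le_exp_sum _ hx_nonneg⟩
  rw [Real.exp_sum, ← prod_mul_distrib]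
  refine prod_le_prod (fun p _ => by positivity) fun p hp => ?_
  have hp : (1 : ℝ) ≤ p := by exact_mod_cast (Nat.prime_of_mem_primeFactors hp).one_le
  have hsq : 1 + 1 / (2 * (p : ℝ)) = 1 + ((p : ℝ) ^ (-(1 / 2 : ℝ))) ^ 2 / 2 := by
    rw [Real.rpow_neg p.cast_nonneg, inv_pow, ← Real.sqrt_eq_rpow, Real.sq_sqrt p.cast_nonneg]
    ring
  rw [hsq, ← div_eq_mul_inv, div_le_iff₀ (by positivity)]
  exact Real.exp_le_one_add_mul_one_add_sq_div_two (hx_nonneg p)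
    (Real.rpow_le_one_of_one_le_of_nonpos hp (by norm_num))
end

section
/- Let \mathcal{M} be a finite set of N positive integers, all of whose prime factors are at most the N-th prime p_N, and let c \in \mathbb{C}^{\mathcal{M}} with \sum_{m} |c_m|^2 = 1. Define s_d := \sum_{m \in \mathcal{M}, \, d \mid m} c_m \sqrt{d/m} for d \in \mathcal{M}, and \Lambda := \sum_{d \in \mathcal{M}} c_d \overline{s_d}. Then |\Lambda|^2 \le \sum_{m,n \in \mathcal{M}} |c_m c_n| \frac{\sigma(\gcd(m,n))}{\sqrt{mn}}, where \sigma is the sum-of-divisors function. -/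
/-!
By Cauchy–Schwarz, `|Λ|² ≤ ∑_d |s_d|²`. Writing `x_m = |c_m| / √m`, the triangle inequality gives
`|s_d| ≤ √d ∑_{m ∈ M, d ∣ m} x_m`; expanding the square and exchanging the sums, the pair `(m, n)`
receives the weight `x_m x_n ∑_{d ∈ M, d ∣ gcd(m, n)} d ≤ x_m x_n σ(gcd(m, n))`.
-/

open Finset

lemma norm_sum_mul_conj_sq_le {ι 𝕜 : Type*} [RCLike 𝕜] (s : Finset ι) (f g : ι → 𝕜) :
    ‖∑ i ∈ s, f i * starRingEnd 𝕜 (g i)‖ ^ 2 ≤ (∑ i ∈ s, ‖f i‖ ^ 2) * ∑ i ∈ s, ‖g i‖ ^ 2 :=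
  calc ‖∑ i ∈ s, f i * starRingEnd 𝕜 (g i)‖ ^ 2 ≤ (∑ i ∈ s, ‖f i‖ * ‖g i‖) ^ 2 := by
        gcongr
        refine (norm_sum_le _ _).trans_eq (sum_congr rfl fun i _ => ?_)
        rw [norm_mul, RCLike.norm_conj]
    _ ≤ _ := sum_mul_sq_le_sq_mul_sq _ _ _

lemma norm_sum_filter_dvd_mul_sqrt_div_le (M : Finset ℕ) (c : ℕ → ℂ) (d : ℕ) :
    ‖∑ m ∈ M.filter (d ∣ ·), c m * (√((d : ℝ) / m) : ℂ)‖ ≤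
      √d * ∑ m ∈ M.filter (d ∣ ·), ‖c m‖ / √m := by
  rw [mul_sum]
  refine (norm_sum_le _ _).trans_eq (sum_congr rfl fun m _ => ?_)
  rw [norm_mul, Complex.norm_real, Real.norm_of_nonneg (Real.sqrt_nonneg _),
    Real.sqrt_div' _ m.cast_nonneg]
  ring

lemma sum_mul_sq_sum_filter_dvd {R : Type*} [CommSemiring R] (M : Finset ℕ) (f x : ℕ → R) :
    ∑ d ∈ M, f d * (∑ m ∈ M.filter (d ∣ ·), x m) ^ 2 =
      ∑ m ∈ M, ∑ n ∈ M, x m * x n * ∑ d ∈ M.filter (· ∣ Nat.gcd m n), f d := by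
  simp_rw [sum_filter, sq, sum_mul_sum, mul_sum]
  rw [sum_comm]
  refine sum_congr rfl fun m _ => ?_
  rw [sum_comm]
  refine sum_congr rfl fun n _ => ?_
  refine sum_congr rfl fun d _ => ?_
  by_cases hm : d ∣ m <;> by_cases hn : d ∣ n <;>
    simp [Nat.dvd_gcd_iff, hm, hn, mul_comm]

lemma sum_filter_dvd_le_sum_divisors {R : Type*} [AddCommMonoid R] [PartialOrder R]
    [IsOrderedAddMonoid R] (M : Finset ℕ) {g : ℕ} (hg : g ≠ 0) {f : ℕ → R} (hf : ∀ d, 0 ≤ f d) :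
    ∑ d ∈ M.filter (· ∣ g), f d ≤ ∑ d ∈ g.divisors, f d :=
  sum_le_sum_of_subset_of_nonneg (fun _ hd => Nat.mem_divisors.2 ⟨(mem_filter.1 hd).2, hg⟩)
    fun d _ _ => hf d

theorem stmt_15_general (M : Finset ℕ)
    (c : ℕ → ℂ) (hc : ∑ m ∈ M, ‖c m‖ ^ 2 = 1)
    (s : ℕ → ℂ)
    (hs : ∀ d, s d = ∑ m ∈ M.filter (d ∣ ·), c m * (Real.sqrt ((d : ℝ) / (m : ℝ)) : ℝ))
    (Λ : ℂ) (hΛ : Λ = ∑ d ∈ M, c d * starRingEnd ℂ (s d)) :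
    ‖Λ‖ ^ 2 ≤ ∑ m ∈ M, ∑ n ∈ M,
      ‖c m‖ * ‖c n‖ * ((∑ d ∈ (Nat.gcd m n).divisors, d : ℕ) : ℝ) /
        Real.sqrt ((m : ℝ) * (n : ℝ)) := by
  set x : ℕ → ℝ := fun m => ‖c m‖ / √m
  calc ‖Λ‖ ^ 2 ≤ ∑ d ∈ M, ‖s d‖ ^ 2 := by
        simpa [hΛ, hc] using norm_sum_mul_conj_sq_le M c s
    _ ≤ ∑ d ∈ M, (d : ℝ) * (∑ m ∈ M.filter (d ∣ ·), x m) ^ 2 := by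
        refine sum_le_sum fun d _ => ?_
        rw [← Real.sq_sqrt d.cast_nonneg, ← mul_pow, hs]
        gcongr
        exact norm_sum_filter_dvd_mul_sqrt_div_le M c d
    _ = ∑ m ∈ M, ∑ n ∈ M, x m * x n * ∑ d ∈ M.filter (· ∣ Nat.gcd m n), (d : ℝ) :=
        sum_mul_sq_sum_filter_dvd M _ x
    _ ≤ ∑ m ∈ M, ∑ n ∈ M, x m * x n * ∑ d ∈ (Nat.gcd m n).divisors, (d : ℝ) := by
        refine sum_le_sum fun m _ => sum_le_sum fun n _ => ?_
        rcases eq_or_ne (Nat.gcd m n) 0 with hg | hg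
        · -- then `m = 0`, and `x 0 = ‖c 0‖ / √0 = 0`
          simp [x, Nat.gcd_eq_zero_iff.1 hg]
        · have := sum_filter_dvd_le_sum_divisors M hg fun d => (d.cast_nonneg : (0 : ℝ) ≤ d)
          gcongr
    _ = _ := by
        push_cast
        refine sum_congr rfl fun m _ => sum_congr rfl fun n _ => ?_
        rw [Real.sqrt_mul m.cast_nonneg]
        ring

theorem stmt_15 (N : ℕ) (M : Finset ℕ) (hcard : M.card = N)
    (hpos : ∀ m ∈ M, 0 < m)
    (hfac : ∀ m ∈ M, ∀ p ∈ m.primeFactors, p ≤ Nat.nth Nat.Prime (N - 1))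
    (c : ℕ → ℂ) (hc : ∑ m ∈ M, ‖c m‖ ^ 2 = 1)
    (s : ℕ → ℂ)
    (hs : ∀ d, s d = ∑ m ∈ M.filter (d ∣ ·), c m * (Real.sqrt ((d : ℝ) / (m : ℝ)) : ℝ))
    (Λ : ℂ) (hΛ : Λ = ∑ d ∈ M, c d * starRingEnd ℂ (s d)) :
    ‖Λ‖ ^ 2 ≤ ∑ m ∈ M, ∑ n ∈ M,
      ‖c m‖ * ‖c n‖ * ((∑ d ∈ (Nat.gcd m n).divisors, d : ℕ) : ℝ) /
        Real.sqrt ((m : ℝ) * (n : ℝ)) :=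
  stmt_15_general M c hc s hs Λ hΛ
end
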